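/- arXiv:2505.10379 — 3 statements merged into one kernel-verified Lean document; each statement's English description precedes it below -/
import Mathlib

section
/- Let h be a symmetric endomorphism of a 3-dimensional real inner product space V, let R ∈ V be a unit vector with h(R) = 0, and let φ be a skew-symmetric endomorphism with φ(R) = 0, φ² = -id on the orthogonal complement of R, and hφ + φh = 0. Then h is orthogonally diagonalizable with eigenvalues (0, μ, -μ) for some μ ≥ 0, and ‖h‖² = 2μ² (Frobenius norm). -/
/-!
Since `h` is symmetric and kills `R`, it preserves the plane `R⊥`, which therefore contains a
unit eigenvector `u`, say `h u = μ u`. On `R⊥` the skew map `φ` is an isometry (`φ² = -1`)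
with `⟪u, φ u⟫ = 0`, and anticommutation gives `h (φ u) = -μ φ u`; replacing `u` by `φ u`
if necessary makes `μ ≥ 0`. In the orthonormal basis `(R, u, φ u)` the trace of `h h*` is
`‖h R‖² + ‖h u‖² + ‖h (φ u)‖² = 2μ²`.
-/

open scoped RealInnerProductSpace InnerProductSpace
open Module

section General

variable {𝕜 E ι : Type*} [RCLike 𝕜] [NormedAddCommGroup E] [InnerProductSpace 𝕜 E]

lemma orthogonal_span_singleton_ne_bot [FiniteDimensional 𝕜 E] (hE : 1 < finrank 𝕜 E) (v : E) :
    (𝕜 ∙ v)ᗮ ≠ ⊥ := by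
  rw [Ne, Submodule.orthogonal_eq_bot_iff]
  intro htop
  have hle : finrank 𝕜 (𝕜 ∙ v) ≤ 1 := by
    simpa using finrank_span_le_card ({v} : Set E)
  rw [htop, finrank_top] at hle
  omega

lemma LinearMap.IsSymmetric.exists_unit_eigenvector_mem_orthogonal [FiniteDimensional 𝕜 E]
    {T : E →ₗ[𝕜] E} (hT : T.IsSymmetric) {p : Submodule 𝕜 E}
    (hp : p ∈ Module.End.invtSubmodule T) (hne : pᗮ ≠ ⊥) :
    ∃ u ∈ pᗮ, ‖u‖ = 1 ∧ ∃ c : 𝕜, T u = c • u := by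
  have hinv : ∀ v ∈ pᗮ, T v ∈ pᗮ := hT.orthogonalComplement_mem_invtSubmodule hp
  have : Nontrivial pᗮ := Submodule.nontrivial_iff_ne_bot.mpr hne
  obtain ⟨c, hc⟩ : ∃ c : 𝕜, Module.End.HasEigenvalue (T.restrict hinv) c :=
    ⟨_, (hT.restrict_invariant hinv).hasEigenvalue_iSup_of_finiteDimensional⟩
  obtain ⟨x, hx⟩ := hc.exists_hasEigenvector
  have hx0 : (x : E) ≠ 0 := by simpa using hx.2
  refine ⟨(‖(x : E)‖⁻¹ : 𝕜) • (x : E), pᗮ.smul_mem _ x.2, ?_, c, ?_⟩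
  · rw [norm_smul, norm_inv, RCLike.norm_ofReal, abs_norm,
      inv_mul_cancel₀ (norm_ne_zero_iff.mpr hx0)]
  · have hTx : T x = c • (x : E) := congrArg Subtype.val hx.apply_eq_smul
    rw [map_smul, hTx, smul_comm]

lemma LinearMap.trace_comp_adjoint_eq_sum_norm_sq [FiniteDimensional 𝕜 E] [Fintype ι]
    (T : E →ₗ[𝕜] E) (b : OrthonormalBasis ι 𝕜 E) :
    LinearMap.trace 𝕜 E (T ∘ₗ LinearMap.adjoint T) =
      ∑ i, (‖LinearMap.adjoint T (b i)‖ ^ 2 : 𝕜) := by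
  rw [LinearMap.trace_eq_sum_inner _ b]
  refine Fintype.sum_congr _ _ fun i => ?_
  rw [LinearMap.comp_apply, ← LinearMap.adjoint_inner_left, inner_self_eq_norm_sq_to_K]

lemma orthonormal_vec3 {x y z : E} (hx : ‖x‖ = 1) (hy : ‖y‖ = 1) (hz : ‖z‖ = 1)
    (hxy : ⟪x, y⟫_𝕜 = 0) (hxz : ⟪x, z⟫_𝕜 = 0) (hyz : ⟪y, z⟫_𝕜 = 0) :
    Orthonormal 𝕜 ![x, y, z] := by
  rw [orthonormal_iff_ite]
  intro i j
  fin_cases i <;> fin_cases j <;>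
    simp [inner_self_eq_norm_sq_to_K, hx, hy, hz, hxy, hxz, hyz, inner_eq_zero_symm.mp hxy,
      inner_eq_zero_symm.mp hxz, inner_eq_zero_symm.mp hyz]

lemma Orthonormal.exists_orthonormalBasis_eq [FiniteDimensional 𝕜 E] [Fintype ι] [Nonempty ι]
    {v : ι → E} (hv : Orthonormal 𝕜 v) (hcard : Fintype.card ι = finrank 𝕜 E) :
    ∃ b : OrthonormalBasis ι 𝕜 E, ⇑b = v :=
  ⟨(basisOfOrthonormalOfCardEqFinrank hv hcard).toOrthonormalBasis (by simpa using hv),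
    by simp⟩

end General

section SkewSymmetric

variable {V : Type*} [NormedAddCommGroup V] [InnerProductSpace ℝ V] {φ : V →ₗ[ℝ] V}

lemma inner_apply_self_eq_zero_of_skew (hφ : ∀ v w : V, ⟪φ v, w⟫ = -⟪v, φ w⟫) (u : V) :
    ⟪u, φ u⟫ = 0 := by
  have := hφ u u
  rw [real_inner_comm] at this
  linarith

lemma inner_apply_eq_zero_of_skew_of_apply_eq_zero (hφ : ∀ v w : V, ⟪φ v, w⟫ = -⟪v, φ w⟫)
    {R : V} (hR : φ R = 0) (u : V) : ⟪R, φ u⟫ = 0 := by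
  simpa [hR] using hφ R u

lemma norm_apply_eq_of_skew_of_apply_apply_eq_neg (hφ : ∀ v w : V, ⟪φ v, w⟫ = -⟪v, φ w⟫)
    {u : V} (hu : φ (φ u) = -u) : ‖φ u‖ = ‖u‖ := by
  have hsq : ⟪φ u, φ u⟫ = ⟪u, u⟫ := by rw [hφ, hu, inner_neg_right, neg_neg]
  rwa [real_inner_self_eq_norm_sq, real_inner_self_eq_norm_sq,
    sq_eq_sq₀ (norm_nonneg _) (norm_nonneg _)] at hsq

end SkewSymmetric

lemma LinearMap.apply_eq_neg_smul_of_anticomm {K M : Type*} [CommRing K] [AddCommGroup M]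
    [Module K M] {h φ : M →ₗ[K] M} (hanti : ∀ v, h (φ v) + φ (h v) = 0) {u : M} {c : K}
    (hu : h u = c • u) : h (φ u) = -c • φ u := by
  rw [neg_smul, ← map_smul, ← hu]
  exact eq_neg_of_add_eq_zero_left (hanti u)

lemma exists_unit_eigenvector_nonneg_of_anticomm {V : Type*} [NormedAddCommGroup V]
    [InnerProductSpace ℝ V] [FiniteDimensional ℝ V] (hV : 1 < finrank ℝ V)
    {h φ : V →ₗ[ℝ] V} (hsymm : h.IsSymmetric) {R : V} (hhR : h R = 0)
    (hφskew : ∀ v w : V, ⟪φ v, w⟫ = -⟪v, φ w⟫) (hφR : φ R = 0)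
    (hφ2 : ∀ v : V, ⟪R, v⟫ = 0 → φ (φ v) = -v)
    (hanticomm : ∀ v : V, h (φ v) + φ (h v) = 0) :
    ∃ μ : ℝ, 0 ≤ μ ∧ ∃ u : V, ⟪R, u⟫ = 0 ∧ ‖u‖ = 1 ∧ h u = μ • u := by
  have hinv : (ℝ ∙ R) ∈ Module.End.invtSubmodule h := by
    intro x hx
    obtain ⟨a, rfl⟩ := Submodule.mem_span_singleton.mp hx
    simp [hhR]
  obtain ⟨u, hRu, hu, c, hhu⟩ :=
    hsymm.exists_unit_eigenvector_mem_orthogonal hinv (orthogonal_span_singleton_ne_bot hV R)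
  rw [Submodule.mem_orthogonal_singleton_iff_inner_right] at hRu
  rcases le_or_gt 0 c with hc | hc
  · exact ⟨c, hc, u, hRu, hu, hhu⟩
  refine ⟨-c, by linarith, φ u, ?_, ?_, LinearMap.apply_eq_neg_smul_of_anticomm hanticomm hhu⟩
  · exact inner_apply_eq_zero_of_skew_of_apply_eq_zero hφskew hφR u
  · rw [norm_apply_eq_of_skew_of_apply_apply_eq_neg hφskew (hφ2 u hRu), hu]

/-- Let `h` be a symmetric endomorphism of a 3-dimensional real inner
product space `V`, `R` a unit vector with `h R = 0`, and `φ` a skew-symmetric endomorphism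
with `φ R = 0`, `φ² = -id` on the orthogonal complement of `R`, and `hφ + φh = 0`.  Then `h`
is orthogonally diagonalizable with eigenvalues `(0, μ, -μ)` for some `μ ≥ 0`, and its
Frobenius norm satisfies `‖h‖² = trace (h ∘ adjoint h) = 2μ²`. -/
theorem symmetric_anticommuting_orthogonally_diagonalizable
    {V : Type*} [NormedAddCommGroup V] [InnerProductSpace ℝ V] [FiniteDimensional ℝ V]
    (hdim : Module.finrank ℝ V = 3)
    (h φ : V →ₗ[ℝ] V)
    (hsymm : ∀ v w : V, ⟪h v, w⟫ = ⟪v, h w⟫)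
    (R : V) (hRunit : ‖R‖ = 1) (hhR : h R = 0)
    (hφskew : ∀ v w : V, ⟪φ v, w⟫ = -⟪v, φ w⟫)
    (hφR : φ R = 0)
    (hφ2 : ∀ v : V, ⟪R, v⟫ = 0 → φ (φ v) = -v)
    (hanticomm : ∀ v : V, h (φ v) + φ (h v) = 0) :
    ∃ μ : ℝ, 0 ≤ μ ∧
      (∃ b : OrthonormalBasis (Fin 3) ℝ V,
        h (b 0) = 0 ∧ h (b 1) = μ • b 1 ∧ h (b 2) = -μ • b 2) ∧
      LinearMap.trace ℝ V (h ∘ₗ LinearMap.adjoint h) = 2 * μ ^ 2 := by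
  obtain ⟨μ, hμ, u, hRu, hu, hhu⟩ := exists_unit_eigenvector_nonneg_of_anticomm (by omega)
    hsymm hhR hφskew hφR hφ2 hanticomm
  have hhφu : h (φ u) = -μ • φ u := LinearMap.apply_eq_neg_smul_of_anticomm hanticomm hhu
  have hφu : ‖φ u‖ = 1 := by
    rw [norm_apply_eq_of_skew_of_apply_apply_eq_neg hφskew (hφ2 u hRu), hu]
  obtain ⟨b, hb⟩ := (orthonormal_vec3 hRunit hu hφu hRu
    (inner_apply_eq_zero_of_skew_of_apply_eq_zero hφskew hφR u)
    (inner_apply_self_eq_zero_of_skew hφskew u)).exists_orthonormalBasis_eq (by simp [hdim])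
  refine ⟨μ, hμ, ⟨b, by simp [hb, hhR], by simp [hb, hhu], by simp [hb, hhφu]⟩, ?_⟩
  rw [LinearMap.trace_comp_adjoint_eq_sum_norm_sq h b, LinearMap.IsSymmetric.adjoint_eq hsymm,
    Fin.sum_univ_three]
  simp [hb, hhR, hhu, hhφu, norm_smul, hu, hφu, two_mul]
end

section
/- Let L ∈ SL(2,ℤ) be hyperbolic with eigenvalue λ, |λ| > 1. On the mapping torus 𝕋²_L with the suspension metric dt² + λ^{2t} dx₊² + λ^{-2t} dx₋² and cosymplectic structure (τ dt, V dx dy), the torsion ‖L_R g‖² equals the constant 8(τ⁻¹ ln|λ|)² and the Chern–Hamilton energy equals 8Vτ⁻¹(ln|λ|)². -/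
/-!
In the frame `(∂_t, ∂_{x₊}, ∂_{x₋})` the suspension metric is `diag(1, |λ|^{2t}, |λ|^{-2t})` and
the Reeb field `R = τ⁻¹ ∂_t` is constant, so it commutes with the frame and `L_R g` is `τ⁻¹ ∂_t`
of the metric coefficients: `diag(0, c |λ|^{2t}, -c |λ|^{-2t})` with `c = 2 τ⁻¹ ln|λ|`.
Thus `G⁻¹ (L_R g) = diag(0, c, -c)`, whose square has the constant trace `2c²`; the energy is this
constant times `τ` times the volume `V` of the fundamental domain `[0,1] × S`.
-/

open MeasureTheory

namespace MappingTorusEnergy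

/-- The coordinate frame `(∂_t, ∂_{x₊}, ∂_{x₋})` on `ℝ³ = ℝ × ℝ × ℝ`. -/
noncomputable def e : Fin 3 → ℝ × ℝ × ℝ := ![(1, 0, 0), (0, 1, 0), (0, 0, 1)]

/-- Lie bracket of vector fields on `ℝ³` in global coordinates. -/
noncomputable def lieBracketVF (X Y : ℝ × ℝ × ℝ → ℝ × ℝ × ℝ) : ℝ × ℝ × ℝ → ℝ × ℝ × ℝ :=
  fun p => fderiv ℝ Y p (X p) - fderiv ℝ X p (Y p)

/-- The suspension metric `dt² + λ^{2t} dx₊² + λ^{-2t} dx₋²` (with `λ^{2t} = |λ|^{2t}`). -/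
noncomputable def gsusp (lam : ℝ) (p v w : ℝ × ℝ × ℝ) : ℝ :=
  v.1 * w.1 + |lam| ^ (2 * p.1) * v.2.1 * w.2.1 + |lam| ^ (-(2 * p.1)) * v.2.2 * w.2.2

/-- The Reeb field `R = τ⁻¹ ∂_t` of the cosymplectic structure `(τ dt, V dx ∧ dy)`. -/
noncomputable def Rf (τ : ℝ) : ℝ × ℝ × ℝ → ℝ × ℝ × ℝ := fun _ => (τ⁻¹, 0, 0)

/-- The components `(L_R g)_{ij} = R(g(e_i,e_j)) - g([R,e_i],e_j) - g(e_i,[R,e_j])`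
of the Lie derivative of the metric in the coordinate frame. -/
noncomputable def LRgComp (lam τ : ℝ) (i j : Fin 3) (p : ℝ × ℝ × ℝ) : ℝ :=
  fderiv ℝ (fun q => gsusp lam q (e i) (e j)) p (Rf τ p)
    - gsusp lam p (lieBracketVF (Rf τ) (fun _ => e i) p) (e j)
    - gsusp lam p (e i) (lieBracketVF (Rf τ) (fun _ => e j) p)

/-- Matrix of the metric in the coordinate frame. -/
noncomputable def Gmat (lam : ℝ) (p : ℝ × ℝ × ℝ) : Matrix (Fin 3) (Fin 3) ℝ :=
  Matrix.of fun i j => gsusp lam p (e i) (e j)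

/-- Matrix of `L_R g` in the coordinate frame. -/
noncomputable def Amat (lam τ : ℝ) (p : ℝ × ℝ × ℝ) : Matrix (Fin 3) (Fin 3) ℝ :=
  Matrix.of fun i j => LRgComp lam τ i j p

/-- The scalar torsion `‖L_R g‖² = gⁱᵏ gʲˡ (L_R g)_{ij} (L_R g)_{kl}
= trace ((G⁻¹ A)²)`. -/
noncomputable def torsion (lam τ : ℝ) (p : ℝ × ℝ × ℝ) : ℝ :=
  Matrix.trace ((Gmat lam p)⁻¹ * Amat lam τ p * ((Gmat lam p)⁻¹ * Amat lam τ p))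

open Real Matrix Set

section Diagonal

variable {n K : Type*} [Fintype n] [DecidableEq n] [Field K] {a : n → K}

theorem inv_diagonal_of_ne_zero (ha : ∀ i, a i ≠ 0) : (diagonal a)⁻¹ = diagonal a⁻¹ :=
  inv_eq_left_inv <| by
    rw [diagonal_mul_diagonal, ← diagonal_one]
    exact congrArg diagonal (funext fun i => inv_mul_cancel₀ (ha i))

theorem trace_sq_inv_diagonal_mul_diagonal (ha : ∀ i, a i ≠ 0) (b : n → K) :
    trace ((diagonal a)⁻¹ * diagonal b * ((diagonal a)⁻¹ * diagonal b)) = ∑ i, (b i / a i) ^ 2 := by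
  simp [inv_diagonal_of_ne_zero ha, diagonal_mul_diagonal, trace_diagonal, div_eq_inv_mul, sq]

end Diagonal

theorem lieBracketVF_const (a b : ℝ × ℝ × ℝ) : lieBracketVF (fun _ => a) (fun _ => b) = 0 := by
  ext1 p; simp [lieBracketVF]

theorem hasDerivAt_rpow_const_mul {b : ℝ} (hb : 0 < b) (k t : ℝ) :
    HasDerivAt (fun s => b ^ (k * s)) (k * log b * b ^ (k * t)) t := by
  simpa [mul_comm k] using ((hasDerivAt_id t).const_mul k).const_rpow hb

variable {lam : ℝ}

theorem hasDerivAt_gsusp_time (hlam : lam ≠ 0) (v w : ℝ × ℝ × ℝ) (x : ℝ × ℝ) (t : ℝ) :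
    HasDerivAt (fun s => gsusp lam (s, x) v w)
      (2 * log |lam| * (|lam| ^ (2 * t) * v.2.1 * w.2.1 - |lam| ^ (-(2 * t)) * v.2.2 * w.2.2)) t := by
  have hb : 0 < |lam| := abs_pos.mpr hlam
  have hup := hasDerivAt_rpow_const_mul hb 2 t
  have hdown : HasDerivAt (fun s => |lam| ^ (-(2 * s))) (-2 * log |lam| * |lam| ^ (-(2 * t))) t := by
    simpa only [neg_mul] using hasDerivAt_rpow_const_mul hb (-2) t
  exact ((((hup.mul_const v.2.1).mul_const w.2.1).const_add (v.1 * w.1)).add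
    ((hdown.mul_const v.2.2).mul_const w.2.2)).congr_deriv (by ring)

theorem fderiv_gsusp_apply (hlam : lam ≠ 0) (v w p u : ℝ × ℝ × ℝ) :
    fderiv ℝ (fun q => gsusp lam q v w) p u =
      u.1 * (2 * log |lam| * (|lam| ^ (2 * p.1) * v.2.1 * w.2.1
        - |lam| ^ (-(2 * p.1)) * v.2.2 * w.2.2)) := by
  have h : HasFDerivAt (fun q => gsusp lam q v w) _ p :=
    (hasDerivAt_gsusp_time hlam v w p.2 p.1).comp_hasFDerivAt p
      (hasFDerivAt_fst (𝕜 := ℝ))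
  rw [h.fderiv, _root_.smul_apply, ContinuousLinearMap.coe_fst', smul_eq_mul, mul_comm]

theorem LRgComp_eq (hlam : lam ≠ 0) (τ : ℝ) (i j : Fin 3) (p : ℝ × ℝ × ℝ) :
    LRgComp lam τ i j p = τ⁻¹ * (2 * log |lam| * (|lam| ^ (2 * p.1) * (e i).2.1 * (e j).2.1
      - |lam| ^ (-(2 * p.1)) * (e i).2.2 * (e j).2.2)) := by
  rw [LRgComp, fderiv_gsusp_apply hlam]
  unfold Rf
  simp [lieBracketVF_const, gsusp]

theorem Gmat_eq_diagonal (p : ℝ × ℝ × ℝ) :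
    Gmat lam p = diagonal ![1, |lam| ^ (2 * p.1), |lam| ^ (-(2 * p.1))] := by
  ext i j
  fin_cases i <;> fin_cases j <;> simp [Gmat, gsusp, e]

theorem Amat_eq_diagonal (hlam : lam ≠ 0) (τ : ℝ) (p : ℝ × ℝ × ℝ) :
    Amat lam τ p = diagonal ![0, 2 * (τ⁻¹ * log |lam|) * |lam| ^ (2 * p.1),
      -(2 * (τ⁻¹ * log |lam|) * |lam| ^ (-(2 * p.1)))] := by
  ext i j
  fin_cases i <;> fin_cases j <;> simp [Amat, LRgComp_eq hlam, e] <;> ring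

theorem torsion_eq (hlam : lam ≠ 0) (τ : ℝ) (p : ℝ × ℝ × ℝ) :
    torsion lam τ p = 8 * (τ⁻¹ * log |lam|) ^ 2 := by
  have hb : 0 < |lam| := abs_pos.mpr hlam
  have hup := (rpow_pos_of_pos hb (2 * p.1)).ne'
  have hdown := (rpow_pos_of_pos hb (-(2 * p.1))).ne'
  have hG : ∀ i, ![1, |lam| ^ (2 * p.1), |lam| ^ (-(2 * p.1))] i ≠ 0 := by
    intro i
    fin_cases i <;> simp [hup, hdown]
  rw [torsion, Gmat_eq_diagonal, Amat_eq_diagonal hlam, trace_sq_inv_diagonal_mul_diagonal hG,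
    Fin.sum_univ_three]
  simp only [Fin.isValue, cons_val_zero, cons_val_one, cons_val_two, vecHead, vecTail,
    Function.comp_apply, Fin.succ_zero_eq_one, neg_div, mul_div_cancel_right₀ _ hup,
    mul_div_cancel_right₀ _ hdown]
  ring

theorem volume_real_Icc_zero_one_prod {β : Type*} [MeasureSpace β] [SFinite (volume : Measure β)]
    (S : Set β) :
    volume.real (Icc (0 : ℝ) 1 ×ˢ S) = volume.real S := by
  rw [Measure.volume_eq_prod, measureReal_prod_prod, Real.volume_real_Icc_of_le zero_le_one,
    sub_zero, one_mul]

end MappingTorusEnergy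

open MappingTorusEnergy in
theorem mappingTorus_torsion_and_energy_general
    (lam : ℝ) (hlam : 1 < |lam|)
    (τ V : ℝ) (hτ : 0 < τ)
    (S : Set (ℝ × ℝ)) (hSV : (volume S).toReal = V) :
    (∀ p : ℝ × ℝ × ℝ, torsion lam τ p = 8 * (τ⁻¹ * Real.log |lam|) ^ 2) ∧
    (∫ p in (Set.Icc (0:ℝ) 1) ×ˢ S, τ * torsion lam τ p ∂volume)
      = 8 * V * τ⁻¹ * Real.log |lam| ^ 2 := by
  have hlam0 : lam ≠ 0 := abs_pos.mp (one_pos.trans hlam)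
  refine ⟨torsion_eq hlam0 τ, ?_⟩
  simp_rw [torsion_eq hlam0 τ]
  rw [setIntegral_const, volume_real_Icc_zero_one_prod, measureReal_def, hSV, smul_eq_mul]
  field_simp [hτ.ne']

open MappingTorusEnergy in
/-- Let `L ∈ SL(2,ℤ)` be hyperbolic with eigenvalue `λ`, `|λ| > 1`.  On
the mapping torus `𝕋²_L` with suspension metric `dt² + λ^{2t} dx₊² + λ^{-2t} dx₋²` and
cosymplectic structure `(τ dt, V dx ∧ dy)` (so that `α ∧ β = τ dt ∧ dx₊ ∧ dx₋` in the
eigencoordinates, and a fundamental domain is `[0,1] × S` with `S` of area `V`), the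
torsion `‖L_R g‖²` is the constant `8 (τ⁻¹ ln|λ|)²` and the Chern–Hamilton energy
`E(g) = ∫ ‖L_R g‖² α ∧ β` equals `8 V τ⁻¹ (ln|λ|)²`. -/
theorem mappingTorus_torsion_and_energy
    (L : Matrix (Fin 2) (Fin 2) ℤ) (hdet : L.det = 1)
    (lam : ℝ) (heig : lam ^ 2 - (L.trace : ℝ) * lam + 1 = 0) (hlam : 1 < |lam|)
    (τ V : ℝ) (hτ : 0 < τ) (hV : 0 < V)
    (S : Set (ℝ × ℝ)) (hS : MeasurableSet S) (hSV : (volume S).toReal = V) :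
    (∀ p : ℝ × ℝ × ℝ, torsion lam τ p = 8 * (τ⁻¹ * Real.log |lam|) ^ 2) ∧
    (∫ p in (Set.Icc (0:ℝ) 1) ×ˢ S, τ * torsion lam τ p ∂volume)
      = 8 * V * τ⁻¹ * Real.log |lam| ^ 2 :=
  mappingTorus_torsion_and_energy_general lam hlam τ V hτ S hSV
end

section
/- Let g₀ be an inner product on a finite-dimensional real vector space V, let R ∈ V be a unit vector, let φ be a g₀-skew endomorphism with φ(R) = 0 and φ² = -id + ⟨R,·⟩₀ R. Let H be a symmetric bilinear form with H(R,·) = 0 and H(φv, w) = H(v, φw) for all v, w. Define H⁺ by g₀(v, H⁺w) = H(v,w), g(t) = g₀(e^{tH⁺}·, ·), and φ(t) = φ e^{tH⁺}. Then for all t: g(t) is a positive-definite symmetric bilinear form, φ(t)² = -id + ⟨R,·⟩₀ R, and g(t)(φ(t)v, φ(t)w) = g(t)(v,w) - g₀(R,v)g₀(R,w). -/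
/-! `H⁺` is `g₀`-self-adjoint, hence so is `e^{tH⁺}`, and `e^{tH⁺} = (e^{tH⁺/2})²` with
`e^{tH⁺/2}` invertible: this gives positivity. Since `φ` is `g₀`-skew and `H`-symmetric it
anticommutes with `H⁺`, so `e^{tH⁺} φ e^{tH⁺} = φ` and `φ(t)² = φ²`. Finally `H⁺ R = 0` gives
`e^{tH⁺} R = R`, and the compatibility identity reduces to
`g₀(φ v, φ w) = g₀(v, w) - g₀(R, v) g₀(R, w)`, a consequence of skewness and `φ² = -id + ⟪R,·⟫ R`. -/

open scoped RealInnerProductSpace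
open NormedSpace

theorem exp_mul_mul_exp_of_mul_eq_neg_mul {𝕜 𝔸 : Type*} [RCLike 𝕜] [NormedRing 𝔸]
    [NormedAlgebra 𝕜 𝔸] [CompleteSpace 𝔸] {a b : 𝔸} (h : b * a = -a * b) :
    exp a * b * exp a = b := by
  -- Mathlib states its `exp` lemmas for normed `ℚ`-algebras.
  let _ : NormedAlgebra ℚ 𝔸 := NormedAlgebra.restrictScalars ℚ 𝕜 𝔸
  simpa using SemiconjBy.exp_neg_mul_mul_exp_eq_self (x := b) h

theorem ContinuousLinearMap.exp_apply_of_apply_eq_zero {𝕜 E : Type*} [RCLike 𝕜]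
    [NormedAddCommGroup E] [NormedSpace 𝕜 E] [CompleteSpace E] {B : E →L[𝕜] E} {v : E}
    (h : B v = 0) : exp B v = v := by
  have hsum := (exp_series_hasSum_exp' (𝕂 := 𝕜) B).mapL (ContinuousLinearMap.apply 𝕜 E v)
  refine hsum.unique (hasSum_single 0 fun n hn => ?_) |>.trans (by simp)
  obtain ⟨m, rfl⟩ := Nat.exists_eq_succ_of_ne_zero hn
  simp [pow_succ, h]

theorem ContinuousLinearMap.inner_exp_apply_self_pos {E : Type*} [NormedAddCommGroup E]
    [InnerProductSpace ℝ E] [CompleteSpace E] {T : E →L[ℝ] E} (hT : IsSelfAdjoint T)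
    {v : E} (hv : v ≠ 0) : 0 < ⟪exp T v, v⟫ := by
  set S := exp ((2⁻¹ : ℝ) • T)
  have hS : IsSelfAdjoint S := ((IsSelfAdjoint.all (2⁻¹ : ℝ)).smul hT).exp
  let _ : NormedAlgebra ℚ (E →L[ℝ] E) := NormedAlgebra.restrictScalars ℚ ℝ _
  have hSS : exp T = S * S := by
    rw [← exp_add_of_commute (Commute.refl _), ← add_smul]; norm_num
  have hSv : S v ≠ 0 := by
    intro h0
    have hinv : exp (-((2⁻¹ : ℝ) • T)) * S = 1 := by
      rw [← exp_add_of_commute (Commute.refl ((2⁻¹ : ℝ) • T)).neg_left, neg_add_cancel, exp_zero]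
    exact hv (by simpa [h0] using (congrArg (· v) hinv).symm)
  calc 0 < ⟪S v, S v⟫ := real_inner_self_pos.mpr hSv
    _ = ⟪exp T v, v⟫ := by rw [hSS, mul_apply_eq_comp, hS.isSymmetric.apply_clm (S v) v]

theorem inner_map_map_of_almostContact {E : Type*} [NormedAddCommGroup E]
    [InnerProductSpace ℝ E] {φ : E → E} {R : E} (hskew : ∀ v w, ⟪φ v, w⟫ = -⟪v, φ w⟫)
    (hsq : ∀ v, φ (φ v) = -v + ⟪R, v⟫ • R) (v w : E) :
    ⟪φ v, φ w⟫ = ⟪v, w⟫ - ⟪R, v⟫ * ⟪R, w⟫ := by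
  rw [hskew, hsq, inner_add_right, inner_neg_right, real_inner_smul_right, real_inner_comm v R]
  ring

theorem ContinuousLinearMap.mul_eq_neg_mul_of_skew {E : Type*} [NormedAddCommGroup E]
    [InnerProductSpace ℝ E] {φ P : E →L[ℝ] E} (hskew : ∀ v w, ⟪φ v, w⟫ = -⟪v, φ w⟫)
    (h : ∀ v w, ⟪φ v, P w⟫ = ⟪v, P (φ w)⟫) : φ * P = -P * φ := by
  ext w
  refine ext_inner_left ℝ fun v => ?_
  simp only [mul_apply_eq_comp, neg_apply, inner_neg_right, ← h, hskew, neg_neg]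

theorem compatible_metric_curve_general
    {V : Type*} [NormedAddCommGroup V] [InnerProductSpace ℝ V] [FiniteDimensional ℝ V]
    (R : V)
    (φ : V →L[ℝ] V)
    (hφskew : ∀ v w : V, ⟪φ v, w⟫ = -⟪v, φ w⟫)
    (hφ2 : ∀ v : V, φ (φ v) = -v + ⟪R, v⟫ • R)
    (H : V →ₗ[ℝ] V →ₗ[ℝ] ℝ)
    (Hsymm : ∀ v w : V, H v w = H w v)
    (hHR : ∀ w : V, H R w = 0)
    (hHφ : ∀ v w : V, H (φ v) w = H v (φ w))
    (Hp : V →L[ℝ] V) (hHp : ∀ v w : V, ⟪v, Hp w⟫ = H v w)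
    (t : ℝ) :
    -- g(t) is symmetric
    (∀ v w : V, ⟪NormedSpace.exp (t • Hp) v, w⟫ = ⟪NormedSpace.exp (t • Hp) w, v⟫) ∧
    -- g(t) is positive definite
    (∀ v : V, v ≠ 0 → 0 < ⟪NormedSpace.exp (t • Hp) v, v⟫) ∧
    -- φ(t)² = -id + ⟪R,·⟫ R
    (∀ v : V, φ (NormedSpace.exp (t • Hp) (φ (NormedSpace.exp (t • Hp) v)))
        = -v + ⟪R, v⟫ • R) ∧
    -- g(t)(φ(t)v, φ(t)w) = g(t)(v,w) - g₀(R,v) g₀(R,w)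
    (∀ v w : V,
      ⟪NormedSpace.exp (t • Hp) (φ (NormedSpace.exp (t • Hp) v)),
          φ (NormedSpace.exp (t • Hp) w)⟫
        = ⟪NormedSpace.exp (t • Hp) v, w⟫ - ⟪R, v⟫ * ⟪R, w⟫) := by
  have hHp_sa : IsSelfAdjoint (t • Hp) := (IsSelfAdjoint.all t).smul <|
    ContinuousLinearMap.isSelfAdjoint_iff_isSymmetric.mpr fun v w => by
      rw [ContinuousLinearMap.coe_coe, real_inner_comm, hHp, hHp, Hsymm]
  have hHpR : Hp R = 0 := inner_self_eq_zero.mp (by rw [hHp, Hsymm, hHR])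
  have hanti : φ * (t • Hp) = -(t • Hp) * φ := by
    have := ContinuousLinearMap.mul_eq_neg_mul_of_skew (P := Hp) hφskew fun v w => by
      rw [hHp, hHp, hHφ]
    rw [mul_smul_comm, this, neg_mul, neg_mul, smul_neg, smul_mul_assoc]
  set A := exp (t • Hp)
  have hA : IsSelfAdjoint A := hHp_sa.exp
  have hAR : A R = R := ContinuousLinearMap.exp_apply_of_apply_eq_zero (by simp [hHpR])
  have hAφA (v : V) : A (φ (A v)) = φ v :=
    congrArg (· v) (exp_mul_mul_exp_of_mul_eq_neg_mul (𝕜 := ℝ) hanti)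
  refine ⟨fun v w => by rw [hA.isSymmetric.apply_clm, real_inner_comm],
    fun v hv => ContinuousLinearMap.inner_exp_apply_self_pos hHp_sa hv,
    fun v => by rw [hAφA, hφ2], fun v w => ?_⟩
  rw [hAφA, inner_map_map_of_almostContact hφskew hφ2, ← hA.isSymmetric.apply_clm R, hAR,
    hA.isSymmetric.apply_clm]

/-- Let `g₀ = ⟪·,·⟫` be an inner product on a finite-dimensional real
vector space `V`, `R` a unit vector, `φ` a `g₀`-skew endomorphism with `φ R = 0` and
`φ² = -id + ⟪R,·⟫ R`.  Let `H` be a symmetric bilinear form with `H(R,·) = 0` and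
`H(φ v, w) = H(v, φ w)`, and let `H⁺` be defined by `⟪v, H⁺ w⟫ = H(v,w)`.  Define
`g(t) = ⟪e^{tH⁺}·,·⟫` and `φ(t) = φ ∘ e^{tH⁺}`.  Then for all `t`: `g(t)` is a
positive-definite symmetric bilinear form, `φ(t)² = -id + ⟪R,·⟫ R`, and
`g(t)(φ(t)v, φ(t)w) = g(t)(v,w) - ⟪R,v⟫ ⟪R,w⟫`. -/
theorem compatible_metric_curve
    {V : Type*} [NormedAddCommGroup V] [InnerProductSpace ℝ V] [FiniteDimensional ℝ V]
    (R : V) (hR : ⟪R, R⟫ = 1)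
    (φ : V →L[ℝ] V)
    (hφskew : ∀ v w : V, ⟪φ v, w⟫ = -⟪v, φ w⟫)
    (hφR : φ R = 0)
    (hφ2 : ∀ v : V, φ (φ v) = -v + ⟪R, v⟫ • R)
    (H : V →ₗ[ℝ] V →ₗ[ℝ] ℝ)
    (Hsymm : ∀ v w : V, H v w = H w v)
    (hHR : ∀ w : V, H R w = 0)
    (hHφ : ∀ v w : V, H (φ v) w = H v (φ w))
    (Hp : V →L[ℝ] V) (hHp : ∀ v w : V, ⟪v, Hp w⟫ = H v w)
    (t : ℝ) :
    -- g(t) is symmetric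
    (∀ v w : V, ⟪NormedSpace.exp (t • Hp) v, w⟫ = ⟪NormedSpace.exp (t • Hp) w, v⟫) ∧
    -- g(t) is positive definite
    (∀ v : V, v ≠ 0 → 0 < ⟪NormedSpace.exp (t • Hp) v, v⟫) ∧
    -- φ(t)² = -id + ⟪R,·⟫ R
    (∀ v : V, φ (NormedSpace.exp (t • Hp) (φ (NormedSpace.exp (t • Hp) v)))
        = -v + ⟪R, v⟫ • R) ∧
    -- g(t)(φ(t)v, φ(t)w) = g(t)(v,w) - g₀(R,v) g₀(R,w)
    (∀ v w : V,
      ⟪NormedSpace.exp (t • Hp) (φ (NormedSpace.exp (t • Hp) v)),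
          φ (NormedSpace.exp (t • Hp) w)⟫
        = ⟪NormedSpace.exp (t • Hp) v, w⟫ - ⟪R, v⟫ * ⟪R, w⟫) :=
  compatible_metric_curve_general R φ hφskew hφ2 H Hsymm hHR hHφ Hp hHp t
end
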